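/- Fix the shared-seed coordinated sampling setup and a function f : V → ℝ_{≥0}. If for every v ∈ V one has lim_{u→0⁺} f̲^{(v)}(u) = f(v), then the J estimator is unbiased: for every v ∈ V, ∫_0^1 f̂^{(J)}(u,v) du = f(v). -/

import Mathlib

open MeasureTheory Set Filter Topology

noncomputable section

/-- A shared-seed coordinated sampling scheme on a data domain `V ⊆ ℝ_{≥0}^r`:
continuous non-decreasing seed-to-threshold maps `τ i : [0,1] → ℝ` whose range
infimum is at most the infimum of the `i`-th coordinate over the domain. -/
structure CoordScheme (r : ℕ) where
  V : Set (Fin r → ℝ)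
  τ : Fin r → ℝ → ℝ
  V_nonneg : ∀ v ∈ V, ∀ i, 0 ≤ v i
  τ_cont : ∀ i, ContinuousOn (τ i) (Set.Icc 0 1)
  τ_mono : ∀ i, MonotoneOn (τ i) (Set.Icc 0 1)
  τ_inf : ∀ i, sInf (τ i '' Set.Icc 0 1) ≤ sInf ((fun v => v i) '' V)

namespace CoordScheme

variable {r : ℕ}

/-- The set `S(u,v)` of sampled entries: `i` is sampled iff `v i ≥ τ i u`. -/
def sampled (C : CoordScheme r) (u : ℝ) (v : Fin r → ℝ) : Set (Fin r) :=
  {i | C.τ i u ≤ v i}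

/-- The consistent set `V*(u,v)` of data vectors consistent with the outcome `S(u,v)`. -/
def Vstar (C : CoordScheme r) (u : ℝ) (v : Fin r → ℝ) : Set (Fin r → ℝ) :=
  {z ∈ C.V | ∀ i, (C.τ i u ≤ v i → z i = v i) ∧ (v i < C.τ i u → z i < C.τ i u)}

/-- The lower bound function `f̲(u,v) = inf { f z : z ∈ V*(u,v) }`. -/
def lb (C : CoordScheme r) (f : (Fin r → ℝ) → ℝ) (u : ℝ) (v : Fin r → ℝ) : ℝ :=
  sInf (f '' C.Vstar u v)

/-- An estimator: an integrable function of the outcome (it takes equal values on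
data vectors consistent with the same outcome). -/
structure IsEstimator (C : CoordScheme r) (fhat : ℝ → (Fin r → ℝ) → ℝ) : Prop where
  integrable : ∀ v ∈ C.V, IntegrableOn (fun u => fhat u v) (Set.Ioc (0:ℝ) 1)
  consistent : ∀ u ∈ Set.Ioc (0:ℝ) 1, ∀ v ∈ C.V, ∀ z ∈ C.Vstar u v, fhat u v = fhat u z

/-- A nonnegative estimator. -/
def Nonneg (C : CoordScheme r) (fhat : ℝ → (Fin r → ℝ) → ℝ) : Prop :=
  ∀ u ∈ Set.Ioc (0:ℝ) 1, ∀ v ∈ C.V, 0 ≤ fhat u v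

/-- An unbiased estimator of `f`. -/
def Unbiased (C : CoordScheme r) (f : (Fin r → ℝ) → ℝ)
    (fhat : ℝ → (Fin r → ℝ) → ℝ) : Prop :=
  ∀ v ∈ C.V, (∫ u in Set.Ioc (0:ℝ) 1, fhat u v) = f v

end CoordScheme

/-- Lower convex hull of `g` on `(0,1]`: the pointwise largest convex function
bounded above by `g` there. -/
def lowerHull (g : ℝ → ℝ) (u : ℝ) : ℝ :=
  sSup {y : ℝ | ∃ h : ℝ → ℝ, ConvexOn ℝ (Set.Ioc (0:ℝ) 1) h ∧
      (∀ x ∈ Set.Ioc (0:ℝ) 1, h x ≤ g x) ∧ y = h u}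

namespace CoordScheme

variable {r : ℕ}

/-- The `v`-optimal estimates: the negated derivative of the lower hull of the
lower-bound function `u ↦ f̲(u,v)`. -/
def optEst (C : CoordScheme r) (f : (Fin r → ℝ) → ℝ) (v : Fin r → ℝ) (u : ℝ) : ℝ :=
  -deriv (lowerHull (fun x => C.lb f x v)) u

/-- Cumulative integral `∫_{2^{-j}}^1` of the J estimator (by its defining recursion):
`Jint (j+1) = Jint j + (value on `(2^{-j-1},2^{-j}]`) ⬝ 2^{-j-1}`. -/
def Jint (C : CoordScheme r) (f : (Fin r → ℝ) → ℝ) (v : Fin r → ℝ) : ℕ → ℝ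
  | 0 => 0
  | (j+1) => Jint C f v j +
      ((2:ℝ) ^ (j+1) * (C.lb f ((2:ℝ) ^ (-(j:ℤ))) v - Jint C f v j)) * (2:ℝ) ^ (-(j:ℤ) - 1)

/-- The (constant) value of the J estimator on the dyadic interval `(2^{-j-1}, 2^{-j}]`.
For `j = 0` this is `2 ⬝ f̲(1,v)`; for `j ≥ 1` it is
`2^{j+1} ⬝ ( f̲(2^{-j},v) − ∫_{2^{-j}}^1 f̂⁽ᴶ⁾(x,v) dx )`. -/
def Jval (C : CoordScheme r) (f : (Fin r → ℝ) → ℝ) (v : Fin r → ℝ) (j : ℕ) : ℝ :=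
  (2:ℝ) ^ (j+1) * (C.lb f ((2:ℝ) ^ (-(j:ℤ))) v - Jint C f v j)

/-- The J estimator `f̂⁽ᴶ⁾(u,v)`: on `u ∈ (2^{-j-1}, 2^{-j}]` it takes the value `Jval j`. -/
def Jest (C : CoordScheme r) (f : (Fin r → ℝ) → ℝ) (u : ℝ) (v : Fin r → ℝ) : ℝ :=
  C.Jval f v ⌊-Real.logb 2 u⌋₊

end CoordScheme

/-!
On the dyadic interval `(2^{-j-1}, 2^{-j}]` the J estimator is constant, with the value that
makes its integral over `(2^{-j-1}, 1]` equal to `f̲(2^{-j}, v)`. So the integrals over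
`(2^{-N}, 1]` are the values of `f̲(·, v)` along `2^{-N} → 0`, which tend to `f(v)`. The values
are nonnegative because `f̲(·, v)` is non-increasing (a smaller seed reveals more, so the
consistent set shrinks), and monotone convergence turns the partial integrals into the integral.
-/

theorem mem_Ioc_two_zpow_iff {u : ℝ} (hu : 0 < u) (j : ℕ) :
    u ∈ Ioc ((2:ℝ) ^ (-(j:ℤ) - 1)) (2 ^ (-(j:ℤ))) ↔
      (j:ℝ) ≤ -Real.logb 2 u ∧ -Real.logb 2 u < j + 1 := by
  rw [mem_Ioc, ← Real.rpow_intCast, ← Real.rpow_intCast,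
    ← Real.lt_logb_iff_rpow_lt one_lt_two hu, ← Real.logb_le_iff_le_rpow one_lt_two hu]
  push_cast
  constructor <;> rintro ⟨h₁, h₂⟩ <;> constructor <;> linarith

theorem floor_neg_logb_two_eq_iff {u : ℝ} (hu : u ∈ Ioc (0:ℝ) 1) (j : ℕ) :
    ⌊-Real.logb 2 u⌋₊ = j ↔ u ∈ Ioc ((2:ℝ) ^ (-(j:ℤ) - 1)) (2 ^ (-(j:ℤ))) := by
  rw [mem_Ioc_two_zpow_iff hu.1,
    Nat.floor_eq_iff (neg_nonneg.2 (Real.logb_nonpos one_lt_two hu.1.le hu.2))]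

theorem iUnion_Ioc_two_zpow :
    ⋃ j : ℕ, Ioc ((2:ℝ) ^ (-(j:ℤ) - 1)) (2 ^ (-(j:ℤ))) = Ioc 0 1 := by
  ext u
  simp only [mem_iUnion]
  constructor
  · rintro ⟨j, h₁, h₂⟩
    exact ⟨(zpow_pos two_pos _).trans h₁, h₂.trans (zpow_le_one_of_nonpos₀ one_le_two (by omega))⟩
  · intro hu
    exact ⟨_, (floor_neg_logb_two_eq_iff hu _).1 rfl⟩

theorem pairwise_disjoint_Ioc_two_zpow :
    Pairwise (Function.onFun Disjoint
      fun j : ℕ => Ioc ((2:ℝ) ^ (-(j:ℤ) - 1)) (2 ^ (-(j:ℤ)))) := by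
  intro j k hjk
  refine disjoint_left.2 fun u huj huk => hjk ?_
  have hu : u ∈ Ioc (0:ℝ) 1 := iUnion_Ioc_two_zpow ▸ mem_iUnion_of_mem j huj
  rw [← (floor_neg_logb_two_eq_iff hu j).2 huj, ← (floor_neg_logb_two_eq_iff hu k).2 huk]

theorem volume_Ioc_two_zpow (j : ℕ) :
    volume (Ioc ((2:ℝ) ^ (-(j:ℤ) - 1)) (2 ^ (-(j:ℤ)))) = ENNReal.ofReal (2 ^ (-(j:ℤ) - 1)) := by
  have h : (2:ℝ) ^ (-(j:ℤ)) = 2 * 2 ^ (-(j:ℤ) - 1) := by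
    rw [← zpow_one_add₀ two_ne_zero]
    ring_nf
  rw [Real.volume_Ioc, h]
  ring_nf

theorem integral_Ioc_step_floor_neg_logb_two {a : ℕ → ℝ} {L : ℝ} (ha : ∀ j, 0 ≤ a j)
    (hL : HasSum (fun j => a j * 2 ^ (-(j:ℤ) - 1)) L) :
    ∫ u in Ioc (0:ℝ) 1, a ⌊-Real.logb 2 u⌋₊ = L := by
  have hterm : ∀ j : ℕ, 0 ≤ a j * (2:ℝ) ^ (-(j:ℤ) - 1) := fun j =>
    mul_nonneg (ha j) (zpow_nonneg zero_le_two _)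
  have hmeas : Measurable fun u : ℝ => a ⌊-Real.logb 2 u⌋₊ :=
    measurable_from_nat.comp (Real.measurable_log.div_const _).neg.nat_floor
  rw [integral_eq_lintegral_of_nonneg_ae (ae_of_all _ fun u => ha _) hmeas.aestronglyMeasurable,
    ← iUnion_Ioc_two_zpow,
    lintegral_iUnion (fun _ => measurableSet_Ioc) pairwise_disjoint_Ioc_two_zpow]
  have hpiece : ∀ j : ℕ, ∫⁻ u in Ioc ((2:ℝ) ^ (-(j:ℤ) - 1)) (2 ^ (-(j:ℤ))),
      ENNReal.ofReal (a ⌊-Real.logb 2 u⌋₊) = ENNReal.ofReal (a j * 2 ^ (-(j:ℤ) - 1)) := by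
    intro j
    rw [setLIntegral_congr_fun measurableSet_Ioc fun u hu => by
        rw [(floor_neg_logb_two_eq_iff (iUnion_Ioc_two_zpow ▸ mem_iUnion_of_mem j hu) j).2 hu],
      setLIntegral_const, volume_Ioc_two_zpow, ENNReal.ofReal_mul (ha j)]
  rw [tsum_congr hpiece, ← ENNReal.ofReal_tsum_of_nonneg hterm hL.summable, hL.tsum_eq,
    ENNReal.toReal_ofReal (hL.nonneg hterm)]

theorem tendsto_two_zpow_neg_natCast_nhdsGT_zero :
    Tendsto (fun n : ℕ => (2:ℝ) ^ (-(n:ℤ))) atTop (𝓝[>] 0) := by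
  refine tendsto_nhdsWithin_iff.2 ⟨?_, .of_forall fun n => mem_Ioi.2 (zpow_pos two_pos _)⟩
  simp only [zpow_neg, zpow_natCast, ← inv_pow]
  exact tendsto_pow_atTop_nhds_zero_of_lt_one (by norm_num) (by norm_num)

namespace CoordScheme

variable {r : ℕ} (C : CoordScheme r) {f : (Fin r → ℝ) → ℝ} {v : Fin r → ℝ}

theorem mem_Vstar_self (hv : v ∈ C.V) (u : ℝ) : v ∈ C.Vstar u v :=
  ⟨hv, fun _ => ⟨fun _ => rfl, id⟩⟩

theorem Vstar_subset_Vstar {u u' : ℝ} (hu' : u' ∈ Icc (0:ℝ) 1) (hu : u ∈ Icc (0:ℝ) 1)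
    (h : u' ≤ u) : C.Vstar u' v ⊆ C.Vstar u v := by
  rintro z ⟨hzV, hz⟩
  refine ⟨hzV, fun i => ⟨fun hle => (hz i).1 ((C.τ_mono i hu' hu h).trans hle), fun _ => ?_⟩⟩
  rcases le_or_gt (C.τ i u') (v i) with hs | hs
  · rwa [(hz i).1 hs]
  · exact ((hz i).2 hs).trans_le (C.τ_mono i hu' hu h)

theorem lb_nonneg (hf : ∀ z ∈ C.V, 0 ≤ f z) (hv : v ∈ C.V) (u : ℝ) : 0 ≤ C.lb f u v :=
  le_csInf ⟨f v, v, C.mem_Vstar_self hv u, rfl⟩ (by rintro _ ⟨z, hz, rfl⟩; exact hf z hz.1)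

theorem lb_antitoneOn (hf : ∀ z ∈ C.V, 0 ≤ f z) (hv : v ∈ C.V) :
    AntitoneOn (fun u => C.lb f u v) (Icc 0 1) := fun u' hu' u hu h =>
  csInf_le_csInf ⟨0, by rintro _ ⟨z, hz, rfl⟩; exact hf z hz.1⟩
    ⟨f v, v, C.mem_Vstar_self hv u', rfl⟩ (image_mono (C.Vstar_subset_Vstar hu' hu h))

theorem Jint_succ (j : ℕ) :
    C.Jint f v (j + 1) = C.Jint f v j + C.Jval f v j * 2 ^ (-(j:ℤ) - 1) :=
  rfl

theorem Jint_succ_eq_lb (j : ℕ) : C.Jint f v (j + 1) = C.lb f (2 ^ (-(j:ℤ))) v := by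
  have h : (2:ℝ) ^ (j + 1) * 2 ^ (-(j:ℤ) - 1) = 1 := by
    rw [← zpow_natCast, ← zpow_add₀ two_ne_zero]
    simp
  rw [Jint_succ, Jval]
  linear_combination (C.lb f (2 ^ (-(j:ℤ))) v - C.Jint f v j) * h

theorem Jval_nonneg (hf : ∀ z ∈ C.V, 0 ≤ f z) (hv : v ∈ C.V) (j : ℕ) : 0 ≤ C.Jval f v j := by
  refine mul_nonneg (by positivity) (sub_nonneg.2 ?_)
  cases j with
  | zero => exact C.lb_nonneg hf hv _
  | succ j =>
    have hmem : ∀ n : ℤ, n ≤ 0 → (2:ℝ) ^ n ∈ Icc 0 1 := fun n hn =>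
      ⟨(zpow_pos two_pos n).le, zpow_le_one_of_nonpos₀ one_le_two hn⟩
    rw [Jint_succ_eq_lb]
    exact C.lb_antitoneOn hf hv (hmem _ (by omega)) (hmem _ (by omega))
      (zpow_le_zpow_right₀ one_le_two (by omega))

theorem sum_range_Jval_mul (N : ℕ) :
    ∑ j ∈ Finset.range N, C.Jval f v j * 2 ^ (-(j:ℤ) - 1) = C.Jint f v N := by
  induction N with
  | zero => rfl
  | succ N ih => rw [Finset.sum_range_succ, ih, Jint_succ]

theorem tendsto_Jint (hlim : Tendsto (fun u => C.lb f u v) (𝓝[>] 0) (𝓝 (f v))) :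
    Tendsto (C.Jint f v) atTop (𝓝 (f v)) := by
  rw [← tendsto_add_atTop_iff_nat 1]
  simp only [Jint_succ_eq_lb]
  exact hlim.comp tendsto_two_zpow_neg_natCast_nhdsGT_zero

theorem hasSum_Jval_mul (hf : ∀ z ∈ C.V, 0 ≤ f z) (hv : v ∈ C.V)
    (hlim : Tendsto (fun u => C.lb f u v) (𝓝[>] 0) (𝓝 (f v))) :
    HasSum (fun j => C.Jval f v j * 2 ^ (-(j:ℤ) - 1)) (f v) := by
  rw [hasSum_iff_tendsto_nat_of_nonneg
    fun j => mul_nonneg (C.Jval_nonneg hf hv j) (zpow_nonneg zero_le_two _)]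
  simpa only [sum_range_Jval_mul] using C.tendsto_Jint hlim

end CoordScheme

/-- if `lim_{u→0⁺} f̲⁽ᵛ⁾(u) = f(v)` for every `v ∈ V`, then the
J estimator is unbiased. -/
theorem stmt13 {r : ℕ} (C : CoordScheme r) (f : (Fin r → ℝ) → ℝ)
    (hf : ∀ v ∈ C.V, 0 ≤ f v)
    (hlim : ∀ v ∈ C.V,
      Filter.Tendsto (fun u => C.lb f u v) (𝓝[>] (0:ℝ)) (𝓝 (f v))) :
    ∀ v ∈ C.V, (∫ u in Set.Ioc (0:ℝ) 1, C.Jest f u v) = f v := by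
  intro v hv
  exact integral_Ioc_step_floor_neg_logb_two (C.Jval_nonneg hf hv)
    (C.hasSum_Jval_mul hf hv (hlim v hv))
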